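/- arXiv:math/0303279 — 4 statements merged into one kernel-verified Lean document; each statement's English description precedes it below -/
import Mathlib

section
/- The Lehmer constant of the cyclic group of order 3 is λ(ℤ/3ℤ) = (1/3) log 2. -/
open Finset

/-- `f` is a finite integer-coefficient linear combination of characters of the
(discrete) abelian group `G`. -/
def IsAddCharComb (G : Type*) [AddCommGroup G] (f : G → ℂ) : Prop :=
  ∃ (s : Finset (AddChar G Circle)) (c : AddChar G Circle → ℤ),
    f = fun x => ∑ χ ∈ s, (c χ : ℂ) * (χ x : ℂ)

/-- The logarithmic Mahler measure of `f` over a finite group, computed with respect to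
the normalized (uniform) Haar probability measure. -/
noncomputable def logMahler {G : Type*} [Fintype G] (f : G → ℂ) : ℝ :=
  (1 / (Fintype.card G : ℝ)) * ∑ x, Real.log ‖f x‖

/-- The Lehmer constant of a finite abelian group. -/
noncomputable def lehmer (G : Type*) [AddCommGroup G] [Fintype G] : ℝ :=
  sInf {r : ℝ | ∃ f : G → ℂ, IsAddCharComb G f ∧ logMahler f = r ∧ 0 < r}

/-!
Every character of `ℤ/3ℤ` takes values in `{1, ζ, ζ²}` with `ζ = e^{2πi/3}`, so for `f ∈ ℤ[Ĝ]`
the value `f 0` is an integer, `f 1 = a + bζ` lies in `ℤ[ζ]` and `f 2 = conj (f 1)`. Hence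
`3 m(f) = log |f 0| + log (a² - ab + b²)` is a sum of logarithms of two integers, each of which is
`0` or at least `log 2`. The bound is attained by `1 + ψ` with `ψ x = ζ^x`, whose values are
`2, -ζ², -ζ`.
-/

open Real ComplexConjugate

theorem Real.log_intCast_eq_zero_or_log_two_le (n : ℤ) : log n = 0 ∨ log 2 ≤ log n := by
  rw [← log_abs, ← Int.cast_abs]
  rcases (show |n| = 0 ∨ |n| = 1 ∨ 2 ≤ |n| by have := abs_nonneg n; omega) with h | h | h
  · left; simp [h]
  · left; simp [h]
  · right; exact log_le_log two_pos (by exact_mod_cast h)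

theorem exists_pow_eq_intCast_add_intCast_mul {R : Type*} [CommRing R] {ζ : R}
    (h : ζ ^ 2 + ζ + 1 = 0) (k : ℕ) : ∃ a b : ℤ, ζ ^ k = a + b * ζ := by
  induction k with
  | zero => exact ⟨1, 0, by simp⟩
  | succ k ih =>
    obtain ⟨a, b, hab⟩ := ih
    exact ⟨-b, a - b, by rw [pow_succ, hab]; push_cast; linear_combination b * h⟩

theorem IsPrimitiveRoot.sq_add_self_add_one {R : Type*} [CommRing R] [IsDomain R] {ζ : R}
    (hζ : IsPrimitiveRoot ζ 3) : ζ ^ 2 + ζ + 1 = 0 := by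
  have := hζ.geom_sum_eq_zero (by norm_num)
  simp only [Finset.sum_range_succ, Finset.sum_range_zero] at this
  linear_combination this

theorem IsPrimitiveRoot.normSq_intCast_add_intCast_mul {ζ : ℂ} (hζ : IsPrimitiveRoot ζ 3)
    (a b : ℤ) : Complex.normSq (a + b * ζ) = a ^ 2 - a * b + b ^ 2 := by
  have hconj : conj ζ = ζ ^ 2 := by
    rw [← Complex.inv_eq_conj (hζ.norm'_eq_one three_ne_zero)]
    exact inv_eq_of_mul_eq_one_right (by rw [← pow_succ']; exact hζ.pow_eq_one)
  apply Complex.ofReal_injective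
  rw [Complex.normSq_eq_conj_mul_self]
  simp only [map_add, map_mul, map_intCast, hconj]
  push_cast
  linear_combination (a * b : ℂ) * hζ.sq_add_self_add_one + (b ^ 2 : ℂ) * hζ.pow_eq_one

theorem ZMod.isPrimitiveRoot_toCircle_one (n : ℕ) [NeZero n] :
    IsPrimitiveRoot (ZMod.toCircle (1 : ZMod n) : ℂ) n := by
  rw [← Nat.cast_one, ZMod.toCircle_natCast]
  simpa using Complex.isPrimitiveRoot_exp n (NeZero.ne n)

theorem AddChar.coe_apply_one_pow_eq_one {n : ℕ} (χ : AddChar (ZMod n) Circle) :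
    (χ 1 : ℂ) ^ n = 1 := by
  rw [← Circle.coe_pow, ← AddChar.map_nsmul_eq_pow]
  simp

theorem ZMod.toCircle_ne_one {n : ℕ} [NeZero n] [Nontrivial (ZMod n)] :
    (ZMod.toCircle : AddChar (ZMod n) Circle) ≠ 1 := fun h =>
  one_ne_zero <| ZMod.injective_toCircle (N := n) <| by
    rw [AddChar.map_zero_eq_one]; simpa using DFunLike.congr_fun h 1

namespace IsAddCharComb

variable {G : Type*} [AddCommGroup G] {f : G → ℂ}

theorem apply_mem (hf : IsAddCharComb G f) {S : AddSubgroup ℂ} (x : G)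
    (hS : ∀ χ : AddChar G Circle, (χ x : ℂ) ∈ S) : f x ∈ S := by
  obtain ⟨s, c, rfl⟩ := hf
  exact S.sum_mem fun χ _ => by rw [← zsmul_eq_mul]; exact S.zsmul_mem (hS χ) _

theorem exists_apply_zero_eq_intCast (hf : IsAddCharComb G f) : ∃ m : ℤ, f 0 = m := by
  obtain ⟨m, hm⟩ := AddSubgroup.mem_zmultiples_iff.mp <|
    hf.apply_mem (S := AddSubgroup.zmultiples 1) 0 fun χ => by simp
  exact ⟨m, by simpa using hm.symm⟩

theorem apply_neg (hf : IsAddCharComb G f) (x : G) : f (-x) = conj (f x) := by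
  obtain ⟨s, c, rfl⟩ := hf
  simp only [map_sum, map_mul, map_intCast, AddChar.map_neg_eq_inv, Circle.coe_inv_eq_conj]

end IsAddCharComb

theorem logMahler_zmod_three {f : ZMod 3 → ℂ} (hf : ∀ x, f (-x) = conj (f x)) :
    logMahler f = (1 / 3) * (log ‖f 0‖ + log (Complex.normSq (f 1))) := by
  have h2 : ‖f 2‖ = ‖f 1‖ := by rw [show (2 : ZMod 3) = -1 from rfl, hf, Complex.norm_conj]
  rw [logMahler, ZMod.card, Complex.normSq_eq_norm_sq, log_pow,
    show ∑ x : ZMod 3, log ‖f x‖ = log ‖f 0‖ + log ‖f 1‖ + log ‖f 2‖ from Fin.sum_univ_three _, h2]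
  push_cast
  ring

local notation "ζ₃" => (ZMod.toCircle (1 : ZMod 3) : ℂ)

theorem IsAddCharComb.exists_apply_one_eq_zmod_three {f : ZMod 3 → ℂ}
    (hf : IsAddCharComb (ZMod 3) f) : ∃ a b : ℤ, f 1 = a + b * ζ₃ := by
  have hζ := ZMod.isPrimitiveRoot_toCircle_one 3
  obtain ⟨a, b, hab⟩ := AddSubgroup.mem_closure_pair.mp <|
    hf.apply_mem (S := AddSubgroup.closure {1, ζ₃}) 1 fun χ => by
      obtain ⟨k, -, hk⟩ := hζ.eq_pow_of_pow_eq_one χ.coe_apply_one_pow_eq_one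
      obtain ⟨a, b, hab⟩ := exists_pow_eq_intCast_add_intCast_mul hζ.sq_add_self_add_one k
      exact AddSubgroup.mem_closure_pair.mpr ⟨a, b, by simp [← hk, hab, zsmul_eq_mul]⟩
  exact ⟨a, b, by simpa [zsmul_eq_mul] using hab.symm⟩

theorem IsAddCharComb.exists_logMahler_eq_zmod_three {f : ZMod 3 → ℂ}
    (hf : IsAddCharComb (ZMod 3) f) : ∃ m n : ℤ, logMahler f = (1 / 3) * (log m + log n) := by
  obtain ⟨m, hm⟩ := hf.exists_apply_zero_eq_intCast
  obtain ⟨a, b, hab⟩ := hf.exists_apply_one_eq_zmod_three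
  refine ⟨m, a ^ 2 - a * b + b ^ 2, ?_⟩
  rw [logMahler_zmod_three hf.apply_neg, hm, hab,
    (ZMod.isPrimitiveRoot_toCircle_one 3).normSq_intCast_add_intCast_mul, Complex.norm_intCast,
    log_abs]
  push_cast
  ring

theorem isAddCharComb_one_add {G : Type*} [AddCommGroup G] {ψ : AddChar G Circle} (hψ : ψ ≠ 1) :
    IsAddCharComb G fun x => 1 + ψ x :=
  ⟨{1, ψ}, fun _ => 1, by ext x; simp [Finset.sum_pair hψ.symm]⟩

theorem logMahler_one_add_toCircle :
    logMahler (fun x : ZMod 3 => 1 + (ZMod.toCircle x : ℂ)) = (1 / 3) * log 2 := by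
  have h1 : Complex.normSq (1 + ζ₃) = 1 := by
    simpa using (ZMod.isPrimitiveRoot_toCircle_one 3).normSq_intCast_add_intCast_mul 1 1
  rw [logMahler_zmod_three (isAddCharComb_one_add ZMod.toCircle_ne_one).apply_neg]
  norm_num [h1]

/-- Example 4.2: the Lehmer constant of `ℤ/3ℤ` is `(1/3) log 2`. -/
theorem lehmer_zmod_three : lehmer (ZMod 3) = (1 / 3) * Real.log 2 := by
  refine IsLeast.csInf_eq ⟨⟨_, isAddCharComb_one_add ZMod.toCircle_ne_one,
    logMahler_one_add_toCircle, by positivity⟩, ?_⟩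
  rintro r ⟨f, hf, rfl, hpos⟩
  obtain ⟨m, n, h⟩ := hf.exists_logMahler_eq_zmod_three
  rw [h] at hpos ⊢
  rcases log_intCast_eq_zero_or_log_two_le m with hm | hm <;>
    rcases log_intCast_eq_zero_or_log_two_le n with hn | hn <;>
    linarith [log_pos (one_lt_two : (1 : ℝ) < 2)]
end

section
/- The Lehmer constant of the cyclic group of order 4 is λ(ℤ/4ℤ) = (1/4) log 3. -/
/-!
On `ZMod 4` every `f ∈ ℤ[Ĝ]` takes integer values `A = f 0`, `B = f 2` and conjugate Gaussian
integer values `f 1 = u + v i`, `f 3 = u - v i`, so `4 m(f) = log N` for the positive integer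
`N = |A| |B| (u² + v²)`, zero factors counting as `1` (this matches `Real.log 0 = 0`).
The congruences `A + B ≡ 2u`, `A - B ≡ 2v (mod 4)` rule out `N = 2`, so `m(f) > 0` forces
`N ≥ 3`, and `1 + χ + χ²` with values `3, i, 1, -i` attains `N = 3`.
-/
open Finset

open Complex

lemma AddChar.zmod_apply_natCast {n : ℕ} {M : Type*} [Monoid M] (χ : AddChar (ZMod n) M)
    (k : ℕ) : χ k = χ 1 ^ k := by
  rw [← map_nsmul_eq_pow, nsmul_one]

lemma AddChar.zmod_apply_one_pow {n : ℕ} {M : Type*} [Monoid M] (χ : AddChar (ZMod n) M) :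
    χ 1 ^ n = 1 := by
  rw [← χ.zmod_apply_natCast, ZMod.natCast_self, map_zero_eq_one]

lemma Complex.eq_one_or_neg_one_or_I_or_neg_I_of_pow_four {z : ℂ} (hz : z ^ 4 = 1) :
    z = 1 ∨ z = -1 ∨ z = I ∨ z = -I := by
  have h : (z - 1) * (z + 1) * (z - I) * (z + I) = 0 := by
    linear_combination hz + (1 - z ^ 2) * I_sq
  simpa only [mul_eq_zero, sub_eq_zero, add_eq_zero_iff_eq_neg, or_assoc] using h

/-- Writing `f = a₀ + a₁ χ + a₂ χ² + a₃ χ³` with `χ 1 = I`, one has `A + B = 2 (a₀ + a₂)`,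
`u = a₀ - a₂`, `A - B = 2 (a₁ + a₃)` and `v = a₁ - a₃`. -/
def zmodFourValueLattice : AddSubgroup (ZMod 4 → ℂ) where
  carrier := {g | ∃ A B u v : ℤ, g 0 = A ∧ g 1 = u + v * I ∧ g 2 = B ∧ g 3 = u - v * I ∧
    A + B ≡ 2 * u [ZMOD 4] ∧ A - B ≡ 2 * v [ZMOD 4]}
  zero_mem' := ⟨0, 0, 0, 0, by simp⟩
  add_mem' := by
    rintro f g ⟨A, B, u, v, hf0, hf1, hf2, hf3, hs, hd⟩
      ⟨A', B', u', v', hg0, hg1, hg2, hg3, hs', hd'⟩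
    refine ⟨A + A', B + B', u + u', v + v', ?_, ?_, ?_, ?_, ?_, ?_⟩
    · simp [hf0, hg0]
    · simp only [Pi.add_apply, hf1, hg1]; push_cast; ring
    · simp [hf2, hg2]
    · simp only [Pi.add_apply, hf3, hg3]; push_cast; ring
    · convert hs.add hs' using 1 <;> ring
    · convert hd.add hd' using 1 <;> ring
  neg_mem' := by
    rintro f ⟨A, B, u, v, h0, h1, h2, h3, hs, hd⟩
    refine ⟨-A, -B, -u, -v, ?_, ?_, ?_, ?_, ?_, ?_⟩
    · simp [h0]
    · simp only [Pi.neg_apply, h1]; push_cast; ring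
    · simp [h2]
    · simp only [Pi.neg_apply, h3]; push_cast; ring
    · convert hs.neg using 1 <;> ring
    · convert hd.neg using 1 <;> ring

lemma addChar_mem_zmodFourValueLattice (χ : AddChar (ZMod 4) Circle) :
    (fun x => (χ x : ℂ)) ∈ zmodFourValueLattice := by
  have h0 : (χ 0 : ℂ) = 1 := by simp
  have h2 : (χ 2 : ℂ) = (χ 1 : ℂ) ^ 2 := by
    rw [← Circle.coe_pow, ← χ.zmod_apply_natCast, Nat.cast_ofNat]
  have h3 : (χ 3 : ℂ) = (χ 1 : ℂ) ^ 3 := by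
    rw [← Circle.coe_pow, ← χ.zmod_apply_natCast, Nat.cast_ofNat]
  have h4 : (χ 1 : ℂ) ^ 4 = 1 := by
    rw [← Circle.coe_pow, χ.zmod_apply_one_pow, Circle.coe_one]
  rcases eq_one_or_neg_one_or_I_or_neg_I_of_pow_four h4 with h | h | h | h
  · exact ⟨1, 1, 1, 0, by norm_num [h0, h2, h3, h, Int.ModEq, pow_succ]⟩
  · exact ⟨1, 1, -1, 0, by norm_num [h0, h2, h3, h, Int.ModEq, pow_succ]⟩
  · exact ⟨1, -1, 0, 1, by norm_num [h0, h2, h3, h, Int.ModEq, pow_succ]⟩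
  · exact ⟨1, -1, 0, -1, by norm_num [h0, h2, h3, h, Int.ModEq, pow_succ]⟩

lemma IsAddCharComb.mem_zmodFourValueLattice {f : ZMod 4 → ℂ} (hf : IsAddCharComb (ZMod 4) f) :
    f ∈ zmodFourValueLattice := by
  obtain ⟨s, c, rfl⟩ := hf
  have hsum : (fun x => ∑ χ ∈ s, (c χ : ℂ) * (χ x : ℂ)) =
      ∑ χ ∈ s, c χ • fun x => (χ x : ℂ) := by
    ext x
    simp [Finset.sum_apply, zsmul_eq_mul]
  rw [hsum]
  exact sum_mem fun χ _ => zsmul_mem (addChar_mem_zmodFourValueLattice χ) _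

lemma Real.log_abs_intCast_eq_log_max_one (n : ℤ) :
    Real.log |(n : ℝ)| = Real.log ((max |n| 1 : ℤ) : ℝ) := by
  rcases eq_or_ne n 0 with rfl | hn
  · simp
  · rw [max_eq_left (Int.one_le_abs hn), Int.cast_abs]

lemma four_mul_logMahler_eq {g : ZMod 4 → ℂ} {A B u v : ℤ} (h0 : g 0 = A) (h1 : g 1 = u + v * I)
    (h2 : g 2 = B) (h3 : g 3 = u - v * I) :
    4 * logMahler g = Real.log ((max |A| 1 * max |B| 1 * max (u ^ 2 + v ^ 2) 1 : ℤ) : ℝ) := by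
  have hnorm1 : ‖g 1‖ = √((u ^ 2 + v ^ 2 : ℤ) : ℝ) := by
    rw [h1]; exact_mod_cast norm_add_mul_I u v
  have hnorm3 : ‖g 3‖ = √((u ^ 2 + v ^ 2 : ℤ) : ℝ) := by
    rw [h3, sub_eq_add_neg, ← neg_mul, ← neg_sq v]; exact_mod_cast norm_add_mul_I u (-v)
  have hsum : ∑ x : ZMod 4, Real.log ‖g x‖ =
      Real.log ‖g 0‖ + Real.log ‖g 1‖ + Real.log ‖g 2‖ + Real.log ‖g 3‖ :=
    Fin.sum_univ_four _
  have hw : Real.log ((u ^ 2 + v ^ 2 : ℤ) : ℝ) = Real.log ((max (u ^ 2 + v ^ 2) 1 : ℤ) : ℝ) := by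
    rw [← Real.log_abs, Real.log_abs_intCast_eq_log_max_one, abs_of_nonneg (by positivity)]
  rw [logMahler, ZMod.card, hsum, hnorm1, hnorm3, h0, h2, norm_intCast, norm_intCast,
    Real.log_sqrt (by positivity), hw, Real.log_abs_intCast_eq_log_max_one,
    Real.log_abs_intCast_eq_log_max_one, Int.cast_mul, Int.cast_mul,
    Real.log_mul (by positivity) (by positivity), Real.log_mul (by positivity) (by positivity)]
  ring

lemma max_abs_mul_max_abs_mul_max_sq_add_sq_ne_two {A B u v : ℤ} (hs : A + B ≡ 2 * u [ZMOD 4])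
    (hd : A - B ≡ 2 * v [ZMOD 4]) : max |A| 1 * max |B| 1 * max (u ^ 2 + v ^ 2) 1 ≠ 2 := by
  set a := max |A| 1 with ha
  set b := max |B| 1 with hb
  set c := max (u ^ 2 + v ^ 2) 1 with hc
  intro h
  have ha2 : a ≤ 2 := Int.le_of_dvd two_pos ⟨b * c, by rw [← h]; ring⟩
  have hb2 : b ≤ 2 := Int.le_of_dvd two_pos ⟨a * c, by rw [← h]; ring⟩
  have hc2 : c ≤ 2 := Int.le_of_dvd two_pos ⟨a * b, by rw [← h]; ring⟩
  have huv : u ^ 2 + v ^ 2 ≤ 2 := (le_max_left _ _).trans hc2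
  obtain ⟨hu1, hu2⟩ : -1 ≤ u ∧ u ≤ 1 := by constructor <;> nlinarith
  obtain ⟨hv1, hv2⟩ : -1 ≤ v ∧ v ≤ 1 := by constructor <;> nlinarith
  have ha1 : 1 ≤ a := le_max_right _ _
  have hb1 : 1 ≤ b := le_max_right _ _
  simp only [Int.ModEq, abs_eq_max_neg] at hs hd ha hb
  interval_cases u <;> interval_cases v <;> interval_cases a <;> interval_cases b <;> omega

lemma log_three_le_four_mul_logMahler {f : ZMod 4 → ℂ} (hf : IsAddCharComb (ZMod 4) f)
    (hpos : 0 < logMahler f) : Real.log 3 ≤ 4 * logMahler f := by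
  obtain ⟨A, B, u, v, h0, h1, h2, h3, hs, hd⟩ := hf.mem_zmodFourValueLattice
  have hm := four_mul_logMahler_eq h0 h1 h2 h3
  set N := max |A| 1 * max |B| 1 * max (u ^ 2 + v ^ 2) 1
  have hN_ge_one : 1 ≤ N := one_le_mul_of_one_le_of_one_le
    (one_le_mul_of_one_le_of_one_le (le_max_right _ _) (le_max_right _ _)) (le_max_right _ _)
  have hN_ne_one : N ≠ 1 := by
    rintro hN
    rw [hN, Int.cast_one, Real.log_one] at hm
    linarith
  have hN_ne_two : N ≠ 2 := max_abs_mul_max_abs_mul_max_sq_add_sq_ne_two hs hd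
  rw [hm]
  exact Real.log_le_log three_pos (by exact_mod_cast (show 3 ≤ N by omega))

lemma ZMod.toCircle_one_eq_I : (ZMod.toCircle (1 : ZMod 4) : ℂ) = I := by
  rw [← Nat.cast_one, ZMod.toCircle_natCast]
  convert exp_pi_div_two_mul_I using 2
  push_cast
  ring

lemma exists_isAddCharComb_four_mul_logMahler_eq_log_three :
    ∃ f : ZMod 4 → ℂ, IsAddCharComb (ZMod 4) f ∧ 4 * logMahler f = Real.log 3 := by
  set ψ : AddChar (ZMod 4) Circle := ZMod.toCircle
  have hψ (k : ℕ) : (ψ k : ℂ) = I ^ k := by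
    rw [ψ.zmod_apply_natCast, Circle.coe_pow, ZMod.toCircle_one_eq_I]
  have hψ1 : (ψ 1 : ℂ) = I := by simpa using hψ 1
  have hne {χ χ' : AddChar (ZMod 4) Circle} (h : (χ 1 : ℂ) ≠ χ' 1) : χ ≠ χ' :=
    fun e => h (by rw [e])
  have h1ψ : 1 ∉ ({ψ, ψ ^ 2} : Finset _) := by
    simp only [mem_insert, mem_singleton, not_or]
    exact ⟨hne (by norm_num [hψ1, Complex.ext_iff]), hne (by norm_num [hψ1, Complex.ext_iff])⟩
  have hψψ : ψ ∉ ({ψ ^ 2} : Finset _) :=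
    mem_singleton.not.mpr (hne (by norm_num [hψ1, Complex.ext_iff]))
  let f : ZMod 4 → ℂ := fun x => ∑ χ ∈ {1, ψ, ψ ^ 2}, ((1 : ℤ) : ℂ) * (χ x : ℂ)
  have hf (k : ℕ) : f k = 1 + I ^ k + (I ^ k) ^ 2 := by
    simp only [f, sum_insert h1ψ, sum_insert hψψ, sum_singleton, AddChar.pow_apply,
      Circle.coe_pow, hψ, AddChar.one_apply, Circle.coe_one]
    ring
  refine ⟨f, ⟨_, fun _ => 1, rfl⟩, ?_⟩
  rw [four_mul_logMahler_eq (A := 3) (B := 1) (u := 0) (v := 1)]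
  · norm_num
  · convert hf 0 using 1 <;> norm_num
  · convert hf 1 using 1 <;> norm_num
  · convert hf 2 using 1 <;> norm_num
  · convert hf 3 using 1 <;> norm_num

/-- Example 4.3: the Lehmer constant of `ℤ/4ℤ` is `(1/4) log 3`. -/
theorem lehmer_zmod_four : lehmer (ZMod 4) = (1 / 4) * Real.log 3 := by
  refine IsLeast.csInf_eq ⟨?_, ?_⟩
  · obtain ⟨f, hf, hm⟩ := exists_isAddCharComb_four_mul_logMahler_eq_log_three
    exact ⟨f, hf, by linarith, by positivity⟩
  · rintro r ⟨f, hf, rfl, hr⟩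
    linarith [log_three_le_four_mul_logMahler hf hr]
end

section
/- For every integer n ≥ 2, the Lehmer constant of the cyclic group of order n satisfies λ(ℤ/nℤ) ≤ (1/n) log ρ(n), where ρ(n) is the smallest prime number not dividing n. -/
open Finset

/-- `rho n` is the smallest prime number that does not divide `n`. -/
noncomputable def rho (n : ℕ) : ℕ := sInf {p : ℕ | p.Prime ∧ ¬ p ∣ n}

/-!
With `p = ρ(n)` and `ζ` a primitive `n`-th root of unity, take
`f(x) = 1 + ζˣ + ⋯ + ζ^{(p-1)x}` on `ℤ/nℤ`. Then `f(0) = p`, and for `x ≠ 0`,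
`f(x) = (ζ^{px} - 1)/(ζˣ - 1)`; since multiplication by `p` permutes the nonzero residues,
these factors multiply to `1`. Hence `∏ₓ f(x) = p` and `m(f) = (1/n) log p > 0`.
-/

theorem rho_prime_and_not_dvd {n : ℕ} (hn : n ≠ 0) : (rho n).Prime ∧ ¬ rho n ∣ n := by
  suffices h : {p : ℕ | p.Prime ∧ ¬ p ∣ n}.Nonempty from Nat.sInf_mem h
  obtain ⟨q, _, hq⟩ := Nat.exists_infinite_primes (n + 1)
  exact ⟨q, hq, fun hdvd => by have := Nat.le_of_dvd (Nat.pos_of_ne_zero hn) hdvd; omega⟩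

theorem isAddCharComb_sum {G ι : Type*} [AddCommGroup G] (s : Finset ι)
    (φ : ι → AddChar G Circle) : IsAddCharComb G fun x => ∑ i ∈ s, (φ i x : ℂ) := by
  classical
  refine ⟨s.image φ, fun χ => #{i ∈ s | φ i = χ}, funext fun x => ?_⟩
  rw [Finset.sum_comp (fun χ : AddChar G Circle => (χ x : ℂ)) φ]
  simp only [nsmul_eq_mul, Int.cast_natCast]

theorem lehmer_le_logMahler {G : Type*} [AddCommGroup G] [Fintype G] {f : G → ℂ}
    (hf : IsAddCharComb G f) (hpos : 0 < logMahler f) : lehmer G ≤ logMahler f :=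
  csInf_le ⟨0, fun _ ⟨_, _, _, hr⟩ => hr.le⟩ ⟨f, hf, rfl, hpos⟩

theorem logMahler_eq_of_prod_ne_zero {G : Type*} [Fintype G] {f : G → ℂ}
    (hf : ∏ x, f x ≠ 0) :
    logMahler f = (1 / (Fintype.card G : ℝ)) * Real.log ‖∏ x, f x‖ := by
  have hf' : ∀ x ∈ univ, ‖f x‖ ≠ 0 := fun x _ =>
    norm_ne_zero_iff.2 fun h => hf (prod_eq_zero (mem_univ x) h)
  rw [logMahler, norm_prod, Real.log_prod hf']

theorem prod_erase_zero_comp_nsmul {G M : Type*} [AddCommGroup G] [Fintype G] [DecidableEq G]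
    [CommMonoid M] {k : ℕ} (hk : (Nat.card G).Coprime k) (g : G → M) :
    ∏ x ∈ univ.erase 0, g (k • x) = ∏ x ∈ univ.erase 0, g x := by
  refine prod_equiv (nsmulCoprime hk) (fun x => ?_) (fun x _ => rfl)
  simp only [mem_erase, mem_univ, and_true]
  exact ((nsmulCoprime hk).injective.ne_iff' (nsmulCoprime_zero hk)).symm

theorem prod_geom_sum_addChar {G R : Type*} [AddCommGroup G] [Fintype G] [CommRing R]
    [IsDomain R] {ψ : AddChar G R} (hψ : Function.Injective ψ) {p : ℕ}
    (hp : (Nat.card G).Coprime p) : ∏ x, ∑ j ∈ range p, ψ x ^ j = p := by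
  classical
  rw [← mul_prod_erase univ _ (mem_univ 0)]
  suffices h : ∏ x ∈ univ.erase 0, ∑ j ∈ range p, ψ x ^ j = 1 by simp [h]
  have hden : ∏ x ∈ univ.erase (0 : G), (ψ x - 1) ≠ 0 :=
    prod_ne_zero_iff.2 fun x hx => sub_ne_zero.2 fun h =>
      (mem_erase.1 hx).1 (hψ (h.trans ψ.map_zero_eq_one.symm))
  refine (mul_eq_right₀ hden).1 ?_
  rw [← prod_mul_distrib]
  simp_rw [geom_sum_mul, ← AddChar.map_nsmul_eq_pow]
  exact prod_erase_zero_comp_nsmul hp fun x => ψ x - 1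

theorem lehmer_zmod_le_general (n : ℕ) [NeZero n] :
    lehmer (ZMod n) ≤ (1 / (n : ℝ)) * Real.log (rho n) := by
  obtain ⟨hp, hpn⟩ := rho_prime_and_not_dvd (NeZero.ne n)
  set p := rho n
  let f : ZMod n → ℂ := fun x => ∑ j ∈ range p, ZMod.stdAddChar x ^ j
  have hprod : ∏ x, f x = p := prod_geom_sum_addChar ZMod.injective_stdAddChar
    (by rw [Nat.card_zmod]; exact (hp.coprime_iff_not_dvd.2 hpn).symm)
  have hlog : logMahler f = (1 / (n : ℝ)) * Real.log p := by
    rw [logMahler_eq_of_prod_ne_zero (by rw [hprod]; exact_mod_cast hp.ne_zero), hprod,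
      ZMod.card, Complex.norm_natCast]
  have hcomb : IsAddCharComb (ZMod n) f := by
    convert isAddCharComb_sum (range p) fun j => (ZMod.toCircle : AddChar (ZMod n) Circle) ^ j
      using 3 with x j
    simp [ZMod.stdAddChar_apply]
  have hpos : 0 < logMahler f := by
    rw [hlog]
    exact mul_pos (one_div_pos.2 (by exact_mod_cast Nat.pos_of_neZero n))
      (Real.log_pos (by exact_mod_cast hp.one_lt))
  exact hlog ▸ lehmer_le_logMahler hcomb hpos

/-- Theorem 4.6: `λ(ℤ/nℤ) ≤ (1/n) log ρ(n)` for all `n ≥ 2`. -/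
theorem lehmer_zmod_le (n : ℕ) [NeZero n] (hn : 2 ≤ n) :
    lehmer (ZMod n) ≤ (1 / (n : ℝ)) * Real.log (rho n) :=
  lehmer_zmod_le_general n
end

section
/- The Lehmer constant of the Klein four-group is λ(ℤ/2ℤ ⊕ ℤ/2ℤ) = (1/4) log 3. -/
/-!
Characters of a group of exponent two take only the values `±1`, so an element `f` of `ℤ[Ĝ]`
takes integer values `n x`, all of the same parity, and `∑ x, n x` is `|G|` times the
coefficient of the trivial character. With the convention `log 0 = 0`, the Mahler measure is
`log N / |G|` for `N = ∏ x, max |n x| 1`. If `N = 2`, one value is `±2` and the others, being even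
of absolute value at most `1`, vanish; then `|G| ∣ ±2`, impossible once `|G| > 2`. So a positive
Mahler measure is at least `log 3 / |G|`, and `χ₁ + χ₂ - χ₁χ₂`, with values `1, 1, 1, -3`,
attains it on the Klein four-group.
-/

open Finset

namespace IsAddCharComb

variable {G : Type*} [AddCommGroup G]

lemma addChar (χ : AddChar G Circle) : IsAddCharComb G fun x => (χ x : ℂ) :=
  ⟨{χ}, fun _ => 1, by simp⟩

lemma add {f g : G → ℂ} (hf : IsAddCharComb G f) (hg : IsAddCharComb G g) :
    IsAddCharComb G (f + g) := by
  classical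
  obtain ⟨s, c, rfl⟩ := hf
  obtain ⟨t, d, rfl⟩ := hg
  refine ⟨s ∪ t, fun χ => (if χ ∈ s then c χ else 0) + (if χ ∈ t then d χ else 0), ?_⟩
  ext x
  simp only [Pi.add_apply, Int.cast_add, add_mul, sum_add_distrib, apply_ite (Int.cast (R := ℂ)),
    Int.cast_zero, ite_mul, zero_mul, sum_ite_mem, union_inter_cancel_left,
    union_inter_cancel_right]

lemma neg {f : G → ℂ} (hf : IsAddCharComb G f) : IsAddCharComb G (-f) := by
  obtain ⟨s, c, rfl⟩ := hf
  exact ⟨s, -c, by ext; simp⟩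

lemma sub {f g : G → ℂ} (hf : IsAddCharComb G f) (hg : IsAddCharComb G g) :
    IsAddCharComb G (f - g) :=
  sub_eq_add_neg f g ▸ hf.add hg.neg

lemma card_dvd_sum [Fintype G] {n : G → ℤ} (hn : IsAddCharComb G fun x => (n x : ℂ)) :
    (Fintype.card G : ℤ) ∣ ∑ x, n x := by
  obtain ⟨s, c, hsc⟩ := hn
  have hχ (χ : AddChar G Circle) : ∃ k : ℤ, ∑ x, (χ x : ℂ) = Fintype.card G * k := by
    classical
    have := (Circle.coeHom.compAddChar χ).sum_eq_ite
    split_ifs at this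
    exacts [⟨1, by rw [Int.cast_one, mul_one]; exact this⟩,
      ⟨0, by rw [Int.cast_zero, mul_zero]; exact this⟩]
  choose k hk using hχ
  refine ⟨∑ χ ∈ s, c χ * k χ, Int.cast_injective (α := ℂ) ?_⟩
  simp only [Int.cast_sum, hsc, Int.cast_mul, Int.cast_natCast]
  rw [sum_comm, mul_sum]
  refine sum_congr rfl fun χ _ => ?_
  rw [← mul_sum, hk]
  ring

section ExponentTwo

variable (hG : ∀ x : G, x + x = 0)
include hG

lemma _root_.AddChar.coe_eq_one_or_neg_one (χ : AddChar G Circle) (x : G) :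
    (χ x : ℂ) = 1 ∨ (χ x : ℂ) = -1 := by
  refine mul_self_eq_one_iff.1 ?_
  rw [← Circle.coe_mul, ← AddChar.map_add_eq_mul, hG, AddChar.map_zero_eq_one, Circle.coe_one]

lemma exists_intCast_of_add_self_eq_zero {f : G → ℂ} (hf : IsAddCharComb G f) :
    ∃ n : G → ℤ, (f = fun x => (n x : ℂ)) ∧ ∀ x y, 2 ∣ n x - n y := by
  obtain ⟨s, c, rfl⟩ := hf
  have hχ (χ : AddChar G Circle) (x : G) : ∃ e : ℤ, (χ x : ℂ) = e ∧ Odd e := by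
    rcases χ.coe_eq_one_or_neg_one hG x with h | h
    exacts [⟨1, by simp [h], odd_one⟩, ⟨-1, by simp [h], odd_neg_one⟩]
  choose e he using hχ
  refine ⟨fun x => ∑ χ ∈ s, c χ * e χ x, by ext x; simp [(he _ x).1], fun x y => ?_⟩
  rw [← sum_sub_distrib]
  refine dvd_sum fun χ _ => ?_
  rw [← mul_sub]
  exact ((he χ x).2.sub_odd (he χ y).2).two_dvd.mul_left _

end ExponentTwo

end IsAddCharComb

lemma prod_max_natAbs_one_ne_two {ι : Type*} [Fintype ι] {n : ι → ℤ} {d : ℤ}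
    (hpar : ∀ i j, 2 ∣ n i - n j) (hd : ¬ d ∣ 2) (hsum : d ∣ ∑ i, n i) :
    ∏ i, max (n i).natAbs 1 ≠ 2 := by
  classical
  intro hprod
  obtain ⟨i, -, k, hk⟩ : ∃ i ∈ univ, 2 ∣ max (n i).natAbs 1 :=
    (Nat.prime_two.prime.dvd_finsetProd_iff _).1 (hprod ▸ dvd_rfl)
  have hrest : k * ∏ j ∈ univ.erase i, max (n j).natAbs 1 = 1 := by
    have := mul_prod_erase univ (fun j => max (n j).natAbs 1) (mem_univ i)
    rw [hprod, hk, mul_assoc] at this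
    omega
  have hni : (n i).natAbs = 2 := by
    have := Nat.eq_one_of_mul_eq_one_right hrest
    omega
  have hzero : ∀ j ≠ i, n j = 0 := by
    intro j hj
    have h1 : max (n j).natAbs 1 ∣ 1 :=
      (dvd_prod_of_mem (fun j => max (n j).natAbs 1) (mem_erase.2 ⟨hj, mem_univ j⟩)).trans
        (Nat.eq_one_of_mul_eq_one_left hrest).dvd
    have h2 := hpar j i
    have h3 := Nat.le_of_dvd one_pos h1
    omega
  rw [sum_eq_single_of_mem i (mem_univ i) fun j _ => hzero j, ← Int.dvd_natAbs, hni] at hsum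
  exact hd hsum

lemma log_norm_intCast (k : ℤ) : Real.log ‖(k : ℂ)‖ = Real.log (max k.natAbs 1 : ℕ) := by
  rcases eq_or_ne k 0 with rfl | hk
  · simp
  · rw [max_eq_left (Int.natAbs_pos.2 hk), Complex.norm_intCast, Nat.cast_natAbs, Int.cast_abs]

lemma log_three_div_card_le_logMahler {G : Type*} [AddCommGroup G] [Fintype G]
    (hG : ∀ x : G, x + x = 0) (hcard : 2 < Fintype.card G) {f : G → ℂ}
    (hf : IsAddCharComb G f) (hpos : 0 < logMahler f) :
    Real.log 3 / Fintype.card G ≤ logMahler f := by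
  obtain ⟨n, rfl, hpar⟩ := hf.exists_intCast_of_add_self_eq_zero hG
  set N := ∏ x, max (n x).natAbs 1
  have hlog : logMahler (fun x => (n x : ℂ)) = Real.log N / Fintype.card G := by
    rw [logMahler, Nat.cast_prod, Real.log_prod fun x _ => by positivity]
    simp only [log_norm_intCast]
    ring
  have hN1 : N ≠ 1 := fun h => by simp [hlog, h] at hpos
  have hN2 : N ≠ 2 := prod_max_natAbs_one_ne_two hpar
    (fun h => by have := Int.le_of_dvd two_pos h; omega) hf.card_dvd_sum
  have hN0 : N ≠ 0 := prod_ne_zero_iff.2 fun x _ => by positivity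
  rw [hlog]
  gcongr
  exact_mod_cast (by omega : 3 ≤ N)

lemma ZMod.coe_toCircle_one_two : (ZMod.toCircle (1 : ZMod 2) : ℂ) = -1 := by
  rw [← Int.cast_one, ZMod.toCircle_intCast, ← Complex.exp_pi_mul_I]
  congr 1
  push_cast
  ring

noncomputable def kleinWitness : ZMod 2 × ZMod 2 → ℂ :=
  fun x => 1 - (1 - ZMod.toCircle x.1) * (1 - ZMod.toCircle x.2)

lemma isAddCharComb_kleinWitness : IsAddCharComb (ZMod 2 × ZMod 2) kleinWitness := by
  let χ₁ := ZMod.toCircle.compAddMonoidHom (AddMonoidHom.fst (ZMod 2) (ZMod 2))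
  let χ₂ := ZMod.toCircle.compAddMonoidHom (AddMonoidHom.snd (ZMod 2) (ZMod 2))
  convert ((IsAddCharComb.addChar χ₁).add (.addChar χ₂)).sub (.addChar (χ₁ * χ₂)) using 1
  ext x
  simp [kleinWitness, χ₁, χ₂]
  ring

lemma logMahler_kleinWitness : logMahler kleinWitness = 1 / 4 * Real.log 3 := by
  have hcard : Fintype.card (ZMod 2 × ZMod 2) = 4 := rfl
  rw [logMahler, hcard, sum_eq_single (1, 1)]
  · simp [kleinWitness, ZMod.coe_toCircle_one_two]
    norm_num
  · rintro ⟨a, b⟩ - hab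
    obtain rfl | rfl : a = 0 ∨ b = 0 := by revert a b; decide
    all_goals simp [kleinWitness]
  · simp

/-- Example 4.8: the Lehmer constant of the Klein four-group `ℤ/2ℤ ⊕ ℤ/2ℤ` is
`(1/4) log 3`. -/
theorem lehmer_klein_four : lehmer (ZMod 2 × ZMod 2) = (1 / 4) * Real.log 3 := by
  have hcard : Fintype.card (ZMod 2 × ZMod 2) = 4 := rfl
  refine IsLeast.csInf_eq ⟨⟨kleinWitness, isAddCharComb_kleinWitness, logMahler_kleinWitness,
    by positivity⟩, ?_⟩
  rintro r ⟨f, hf, rfl, hpos⟩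
  have := log_three_div_card_le_logMahler (by decide) (by rw [hcard]; norm_num) hf hpos
  rw [hcard] at this
  linarith
end
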